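/- arXiv:0910.2786 — 4 statements merged into one kernel-verified Lean document; each statement's English description precedes it below -/
import Mathlib

section
/- Let ε > 0, λ ≥ 0 with λ ≤ Cε, and let κ : ℝ₊ → ℝ be measurable with |κ(s)| ≤ C₀ uniformly. Then for any real numbers E and α with E ≠ α, |∫₀^∞ ds e^{-is(E-α)} e^{-εs} e^{-iλ∫_τ^{τ+s} κ(s')ds'}| ≤ C'/( |E-α| + ε ), uniformly in τ ≥ 0, where C' depends only on C, C₀. -/
/-!
Write `d = E - α` and `ζ = π / |d|`, so that shifting `s` by `ζ` flips the sign of the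
oscillating factor `e^{-isd}`. Pairing the integral `I = ∫₀^∞ F` with its shift by `ζ` gives
`2 I = ∫₀^ζ F + ∫₀^∞ (F(s) + F(s + ζ))`. The first term is at most `ζ`; in the second, the two
remaining factors `e^{-εs}` and `e^{-iλ∫_τ^{τ+s}κ}` move by at most `εζ` and `λC₀ζ ≤ CC₀εζ`
over one shift, and integrating against `e^{-εs}` costs `1/ε`. Hence `|I| ≲ ζ ~ 1/|d|`, while
trivially `|I| ≤ 1/ε`; the two bounds combine into `C' / (|d| + ε)`.
-/

open MeasureTheory Set
open Complex (I)
open scoped NNReal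

theorem lipschitzWith_one_cexp_I_mul_ofReal : LipschitzWith 1 fun x : ℝ => Complex.exp (I * x) :=
  LipschitzWith.of_dist_le_mul fun x y => by
    have h : Complex.exp (I * x) - Complex.exp (I * y)
        = Complex.exp (I * y) * (Complex.exp (I * ↑(x - y)) - 1) := by
      rw [mul_sub, ← Complex.exp_add]; push_cast; ring_nf
    rw [dist_eq_norm, h, norm_mul, Complex.norm_exp_I_mul_ofReal, one_mul, NNReal.coe_one,
      one_mul]
    exact Real.norm_exp_I_mul_ofReal_sub_one_le

theorem lipschitzWith_intervalIntegral_add_of_norm_le {E : Type*} [NormedAddCommGroup E]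
    [NormedSpace ℝ E] {κ : ℝ → E} {C : ℝ≥0} (hκ : AEStronglyMeasurable κ volume)
    (hκ_le : ∀ t, ‖κ t‖ ≤ C) (a : ℝ) : LipschitzWith C fun x => ∫ t in a..(a + x), κ t := by
  have hint : ∀ x y : ℝ, IntervalIntegrable κ volume x y := fun x y =>
    intervalIntegrable_iff.2 <| Measure.integrableOn_of_bounded measure_Ioc_lt_top.ne
      hκ (.of_forall hκ_le)
  refine LipschitzWith.of_dist_le_mul fun x y => ?_
  rw [dist_eq_norm, intervalIntegral.integral_interval_sub_left (hint a _) (hint a _),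
    Real.dist_eq, ← add_sub_add_left_eq_sub x y a]
  exact intervalIntegral.norm_integral_le_of_norm_le_const fun t _ => hκ_le t

theorem le_add_div_add_of_le_div_of_le_div {x A B a b : ℝ} (ha : 0 < a) (hb : 0 < b)
    (hA : x ≤ A / a) (hB : x ≤ B / b) : x ≤ (A + B) / (a + b) := by
  rw [le_div_iff₀ ha] at hA
  rw [le_div_iff₀ hb] at hB
  rw [le_div_iff₀ (add_pos ha hb)]
  linarith

section ExpDecay

variable {E : Type*} [NormedAddCommGroup E] {f : ℝ → E} {ε M : ℝ}

theorem integrableOn_Ioi_of_norm_le_exp (a : ℝ) (hε : 0 < ε)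
    (hf : AEStronglyMeasurable f (volume.restrict (Ioi a)))
    (h : ∀ s, ‖f s‖ ≤ M * Real.exp (-(ε * s))) : IntegrableOn f (Ioi a) :=
  Integrable.mono' ((exp_neg_integrableOn_Ioi a hε).const_mul M) hf
    (.of_forall fun s => by simpa [neg_mul] using h s)

theorem norm_setIntegral_Ioi_zero_le_of_norm_le_exp [NormedSpace ℝ E] (hε : 0 < ε)
    (h : ∀ s, ‖f s‖ ≤ M * Real.exp (-(ε * s))) : ‖∫ s in Ioi 0, f s‖ ≤ M / ε := by
  simp_rw [← neg_mul] at h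
  calc ‖∫ s in Ioi 0, f s‖ ≤ ∫ s in Ioi 0, M * Real.exp (-ε * s) :=
        norm_integral_le_of_norm_le ((exp_neg_integrableOn_Ioi 0 hε).const_mul M) (.of_forall h)
    _ = M / ε := by
        rw [integral_const_mul, integral_exp_mul_Ioi (neg_lt_zero.2 hε)]
        simp only [mul_zero, Real.exp_zero]
        ring

end ExpDecay

theorem two_smul_setIntegral_Ioi_eq {E : Type*} [NormedAddCommGroup E] [NormedSpace ℝ E]
    {f : ℝ → E} {a h : ℝ} (hh : 0 ≤ h) (hf : IntegrableOn f (Ioi a)) :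
    (2 : ℝ) • ∫ s in Ioi a, f s
      = (∫ s in Ioc a (a + h), f s) + ∫ s in Ioi a, (f s + f (s + h)) := by
  have hshift := measurePreserving_add_right volume h
  have hpre : (· + h) ⁻¹' Ioi (a + h) = Ioi a := by ext; simp
  have hf_shift : IntegrableOn (fun s => f (s + h)) (Ioi a) := by
    rw [← hpre]
    exact (hshift.integrableOn_comp_preimage (measurableEmbedding_addRight h)).2
      (hf.mono_set (Ioi_subset_Ioi (by linarith)))
  have htail : ∫ s in Ioi (a + h), f s = ∫ s in Ioi a, f (s + h) := by
    rw [← hpre, hshift.setIntegral_preimage_emb (measurableEmbedding_addRight h)]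
  have hsplit : ∫ s in Ioi a, f s = (∫ s in Ioc a (a + h), f s) + ∫ s in Ioi (a + h), f s := by
    rw [← setIntegral_union Ioc_disjoint_Ioi_same measurableSet_Ioi
      (hf.mono_set Ioc_subset_Ioi_self) (hf.mono_set (Ioi_subset_Ioi (by linarith))),
      Ioc_union_Ioi_eq_Ioi (by linarith)]
  rw [integral_add hf hf_shift, two_smul, ← htail]
  nth_rewrite 1 [hsplit]
  abel

theorem Complex.exp_neg_I_mul_add_pi_div_abs_mul (s : ℝ) {d : ℝ} (hd : d ≠ 0) :
    Complex.exp (-I * ↑(s + Real.pi / |d|) * d) = -Complex.exp (-I * s * d) := by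
  have hd' : (d : ℂ) ≠ 0 := by exact_mod_cast hd
  rcases hd.lt_or_gt with hneg | hpos
  · have : -I * ↑(s + Real.pi / |d|) * d = -I * s * d + Real.pi * I := by
      rw [abs_of_neg hneg]; push_cast; field_simp; ring
    rw [this, Complex.exp_add_pi_mul_I]
  · have : -I * ↑(s + Real.pi / |d|) * d = -I * s * d - Real.pi * I := by
      rw [abs_of_pos hpos]; push_cast; field_simp; ring
    rw [this, Complex.exp_sub_pi_mul_I]

theorem LipschitzWith.norm_sub_cexp_neg_mul_mul_comp_add_le {L : ℝ≥0} {g : ℝ → ℂ}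
    (hg : LipschitzWith L g) (hg_le : ∀ s, ‖g s‖ ≤ 1) {ε h : ℝ} (hε : 0 ≤ ε) (hh : 0 ≤ h)
    (s : ℝ) : ‖g s - Complex.exp (-(ε * h)) * g (s + h)‖ ≤ (L + ε) * h := by
  have hlip : ‖g s - g (s + h)‖ ≤ L * h := by
    simpa [← dist_eq_norm, Real.dist_eq, abs_of_nonneg hh] using hg.dist_le_mul s (s + h)
  have hdamp : ‖(1 - Complex.exp (-(ε * h))) * g (s + h)‖ ≤ ε * h := by
    have h1 : (1 : ℂ) - Complex.exp (-(ε * h)) = ((1 - Real.exp (-(ε * h)) : ℝ) : ℂ) := by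
      push_cast; rfl
    have h2 : Real.exp (-(ε * h)) ≤ 1 := Real.exp_le_one_iff.2 (by nlinarith)
    rw [norm_mul, h1, Complex.norm_real, Real.norm_of_nonneg (by linarith)]
    nlinarith [Real.add_one_le_exp (-(ε * h)), hg_le (s + h), norm_nonneg (g (s + h))]
  calc ‖g s - Complex.exp (-(ε * h)) * g (s + h)‖
      = ‖(g s - g (s + h)) + (1 - Complex.exp (-(ε * h))) * g (s + h)‖ := by ring_nf
    _ ≤ L * h + ε * h := (norm_add_le _ _).trans (add_le_add hlip hdamp)
    _ = (L + ε) * h := by ring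

noncomputable def dampedOscillation (d ε : ℝ) (g : ℝ → ℂ) (s : ℝ) : ℂ :=
  Complex.exp (-I * s * d) * Complex.exp (-(ε * s)) * g s

namespace dampedOscillation

variable {d ε : ℝ} {g : ℝ → ℂ}

theorem norm_le (hg_le : ∀ s, ‖g s‖ ≤ 1) (s : ℝ) :
    ‖dampedOscillation d ε g s‖ ≤ 1 * Real.exp (-(ε * s)) := by
  simpa [dampedOscillation, Complex.norm_exp] using
    mul_le_of_le_one_right (Real.exp_pos _).le (hg_le s)

theorem add_comp_add_pi_div_abs (hd : d ≠ 0) (s : ℝ) :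
    dampedOscillation d ε g s + dampedOscillation d ε g (s + Real.pi / |d|)
      = Complex.exp (-I * s * d) * Complex.exp (-(ε * s))
        * (g s - Complex.exp (-(ε * ↑(Real.pi / |d|))) * g (s + Real.pi / |d|)) := by
  simp only [dampedOscillation]
  rw [Complex.exp_neg_I_mul_add_pi_div_abs_mul s hd]
  generalize Real.pi / |d| = ζ
  push_cast
  rw [show -((ε : ℂ) * (s + ζ)) = -(ε * s) + -(ε * ζ) by ring, Complex.exp_add]
  ring

theorem norm_add_comp_add_pi_div_abs_le {L : ℝ≥0} (hε : 0 ≤ ε) (hd : d ≠ 0)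
    (hg : LipschitzWith L g) (hg_le : ∀ s, ‖g s‖ ≤ 1) (s : ℝ) :
    ‖dampedOscillation d ε g s + dampedOscillation d ε g (s + Real.pi / |d|)‖
      ≤ (L + ε) * (Real.pi / |d|) * Real.exp (-(ε * s)) := by
  have hdecay : ‖Complex.exp (-I * s * d)‖ * ‖Complex.exp (-(ε * s))‖ = Real.exp (-(ε * s)) := by
    simp [Complex.norm_exp]
  rw [add_comp_add_pi_div_abs hd, norm_mul, norm_mul, hdecay, mul_comm]
  exact mul_le_mul_of_nonneg_right
    (hg.norm_sub_cexp_neg_mul_mul_comp_add_le hg_le hε (by positivity) s) (Real.exp_pos _).le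

theorem norm_setIntegral_Ioi_le_one_div (hε : 0 < ε) (hg_le : ∀ s, ‖g s‖ ≤ 1) :
    ‖∫ s in Ioi (0 : ℝ), dampedOscillation d ε g s‖ ≤ 1 / ε :=
  norm_setIntegral_Ioi_zero_le_of_norm_le_exp hε (norm_le hg_le)

theorem norm_setIntegral_Ioi_le_of_lipschitzWith {L : ℝ≥0} (hε : 0 < ε) (hd : d ≠ 0)
    (hg : LipschitzWith L g) (hg_le : ∀ s, ‖g s‖ ≤ 1) :
    ‖∫ s in Ioi (0 : ℝ), dampedOscillation d ε g s‖ ≤ (1 + L / (2 * ε)) * (Real.pi / |d|) := by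
  set ζ := Real.pi / |d|
  have hζ_pos : 0 < ζ := div_pos Real.pi_pos (abs_pos.2 hd)
  have hint : IntegrableOn (dampedOscillation d ε g) (Ioi 0) := by
    refine integrableOn_Ioi_of_norm_le_exp 0 hε ?_ (norm_le hg_le)
    have := hg.continuous
    exact Continuous.aestronglyMeasurable (by unfold dampedOscillation; fun_prop)
  have hhead : ‖∫ s in Ioc 0 (0 + ζ), dampedOscillation d ε g s‖ ≤ ζ := by
    have h := norm_setIntegral_le_of_norm_le_const (C := 1) (measure_Ioc_lt_top (μ := volume))
      fun s (hs : s ∈ Ioc 0 (0 + ζ)) => (norm_le (d := d) hg_le s).trans <| by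
        simpa using Real.exp_le_one_iff.2 (show -(ε * s) ≤ 0 by nlinarith [hs.1])
    simpa [Real.volume_real_Ioc_of_le hζ_pos.le] using h
  have htail : ‖∫ s in Ioi 0, (dampedOscillation d ε g s + dampedOscillation d ε g (s + ζ))‖
      ≤ (L + ε) * ζ / ε :=
    norm_setIntegral_Ioi_zero_le_of_norm_le_exp hε
      (norm_add_comp_add_pi_div_abs_le hε.le hd hg hg_le)
  have htwice : 2 * ‖∫ s in Ioi 0, dampedOscillation d ε g s‖ ≤ ζ + (L + ε) * ζ / ε := by
    rw [← Real.norm_two, ← norm_smul, two_smul_setIntegral_Ioi_eq hζ_pos.le hint]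
    exact (norm_add_le _ _).trans (add_le_add hhead htail)
  calc ‖∫ s in Ioi 0, dampedOscillation d ε g s‖ ≤ (ζ + (L + ε) * ζ / ε) / 2 := by linarith
    _ = (1 + L / (2 * ε)) * ζ := by field_simp; ring

theorem norm_setIntegral_Ioi_le_div_abs_add {A : ℝ} {L : ℝ≥0} (hε : 0 < ε) (hd : d ≠ 0)
    (hg : LipschitzWith L g) (hg_le : ∀ s, ‖g s‖ ≤ 1) (hL : L ≤ A * ε) :
    ‖∫ s in Ioi (0 : ℝ), dampedOscillation d ε g s‖
      ≤ ((1 + A / 2) * Real.pi + 1) / (|d| + ε) := by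
  refine le_add_div_add_of_le_div_of_le_div (abs_pos.2 hd) hε ?_
    (norm_setIntegral_Ioi_le_one_div hε hg_le)
  have hLA : L / (2 * ε) ≤ A / 2 := by
    rw [div_le_iff₀ (by positivity)]
    linarith
  calc _ ≤ (1 + L / (2 * ε)) * (Real.pi / |d|) :=
        norm_setIntegral_Ioi_le_of_lipschitzWith hε hd hg hg_le
    _ ≤ (1 + A / 2) * (Real.pi / |d|) := by gcongr
    _ = (1 + A / 2) * Real.pi / |d| := (mul_div_assoc ..).symm

end dampedOscillation

/-- Phase cancellation lemma (scalar core): for `ε > 0`, `0 ≤ λ ≤ Cε`, and a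
measurable `κ` with `|κ(s)| ≤ C₀`, for any reals `E ≠ α`,
`|∫₀^∞ ds e^{-is(E-α)} e^{-εs} e^{-iλ∫_τ^{τ+s}κ(s')ds'}| ≤ C' / (|E-α| + ε)`,
uniformly in `τ ≥ 0`, where `C'` depends only on `C, C₀`. -/
theorem phase_cancellation (C C₀ : ℝ) (hC : 0 ≤ C) (hC₀ : 0 ≤ C₀) :
    ∃ C' : ℝ, 0 < C' ∧
      ∀ (ε lam τ E α : ℝ) (κ : ℝ → ℝ),
        0 < ε → 0 ≤ lam → lam ≤ C * ε →
        Measurable κ → (∀ s, |κ s| ≤ C₀) →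
        0 ≤ τ → E ≠ α →
        ‖∫ s in Set.Ioi (0 : ℝ),
            Complex.exp (-Complex.I * s * ((E : ℂ) - α)) * Complex.exp (-(ε * s))
              * Complex.exp (-Complex.I * lam * (∫ t in τ..(τ + s), (κ t : ℂ)))‖
          ≤ C' / (|E - α| + ε) := by
  refine ⟨(1 + C * C₀ / 2) * Real.pi + 1, by positivity, ?_⟩
  intro ε lam τ E α κ hε hlam hlamC hκ hκ_le _ hEα
  set L : ℝ≥0 := ⟨lam * C₀, mul_nonneg hlam hC₀⟩
  set g : ℝ → ℂ := fun s => Complex.exp (I * ↑(∫ t in τ..(τ + s), -lam * κ t))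
  have hphase : LipschitzWith L fun s => ∫ t in τ..(τ + s), -lam * κ t :=
    lipschitzWith_intervalIntegral_add_of_norm_le (by fun_prop) (fun t => show _ ≤ lam * C₀ by
      simpa [abs_mul, abs_of_nonneg hlam] using mul_le_mul_of_nonneg_left (hκ_le t) hlam) τ
  have hg : LipschitzWith L g := by
    rw [← one_mul L]
    exact lipschitzWith_one_cexp_I_mul_ofReal.comp hphase
  have hintegrand : ∀ s : ℝ, Complex.exp (-Complex.I * s * ((E : ℂ) - α))
      * Complex.exp (-(ε * s)) * Complex.exp (-Complex.I * lam * (∫ t in τ..(τ + s), (κ t : ℂ)))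
      = dampedOscillation (E - α) ε g s := fun s => by
    simp only [dampedOscillation, g, intervalIntegral.integral_const_mul,
      intervalIntegral.integral_ofReal]
    push_cast
    ring_nf
  simp_rw [hintegrand]
  exact dampedOscillation.norm_setIntegral_Ioi_le_div_abs_add hε (sub_ne_zero.2 hEα) hg
    (fun s => (Complex.norm_exp_I_mul_ofReal _).le) (show lam * C₀ ≤ C * C₀ * ε by nlinarith)
end

section
/- Suppose the oscillatory decay |∫_{T³} du e^{-is E(u)}| ≤ C⟨s⟩^{-3/2} holds. Then for ν > 0, sup over α ∈ ℝ and over a ∈ [-6,6] of |∫_{T³} du' 1/(E(u') - a - α - iν)| is bounded by a constant C' independent of ν, α, a. -/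
open MeasureTheory Set Filter Complex

/-!
Write the resolvent as a Laplace transform of the free evolution: for `Im c > 0`,
`(E - c)⁻¹ = i ∫₀^∞ e^{-is(E - c)} ds`. Integrating over `u` and exchanging the integrals
(the integrand is dominated by `e^{-s Im c}` on a finite measure space) expresses the resolvent
integral through `∫ e^{-isE(u)} du`, and `|e^{isc}| ≤ 1` for `s > 0`. Hence it is bounded by
`∫₀^∞ C ⟨s⟩^{-3/2} ds`, which is finite and independent of `c`.
-/

theorem inv_eq_I_mul_integral_cexp_Ioi {w : ℂ} (hw : w.im < 0) :
    w⁻¹ = I * ∫ s in Ioi (0 : ℝ), cexp (-I * w * s) := by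
  have hre : (-I * w).re < 0 := by simpa using hw
  have hw0 : w ≠ 0 := by rintro rfl; simp at hw
  rw [integral_exp_mul_complex_Ioi hre]
  field_simp
  simp

theorem norm_cexp_neg_I_mul_mul (w : ℂ) (s : ℝ) : ‖cexp (-I * w * s)‖ = Real.exp (w.im * s) := by
  rw [norm_exp]
  simp

theorem integrable_one_add_sq_rpow_neg {r : ℝ} (hr : 1 / 2 < r) :
    Integrable fun s : ℝ => (1 + s ^ 2) ^ (-r) := by
  have h := integrable_rpow_neg_one_add_norm_sq (E := ℝ) (μ := volume) (r := 2 * r)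
    (by rw [Module.finrank_self, Nat.cast_one]; linarith)
  convert h using 3 with s
  · rw [Real.norm_eq_abs, sq_abs]
  · ring

section Resolvent

variable {X : Type*} [MeasurableSpace X] (μ : Measure X) [IsFiniteMeasure μ]
  {E : X → ℝ} (hE : Measurable E) {c : ℂ} (hc : 0 < c.im)
include hE hc

theorem integrable_prod_cexp_neg_I_mul_sub :
    Integrable (Function.uncurry fun (u : X) (s : ℝ) => cexp (-I * ((E u : ℂ) - c) * s))
      (μ.prod (volume.restrict (Ioi 0))) := by
  have hmeas : Measurable fun p : X × ℝ => cexp (-I * ((E p.1 : ℂ) - c) * p.2) := by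
    fun_prop
  refine Integrable.mono' ((integrable_const (1 : ℝ)).mul_prod
      (integrableOn_exp_mul_Ioi (neg_lt_zero.mpr hc) 0)) hmeas.aestronglyMeasurable
      (Eventually.of_forall fun ⟨u, s⟩ => ?_)
  rw [Function.uncurry_apply_pair, norm_cexp_neg_I_mul_mul]
  simp

theorem integral_inv_sub_eq_integral_Ioi :
    ∫ u, ((E u : ℂ) - c)⁻¹ ∂μ =
      I * ∫ s in Ioi (0 : ℝ), (∫ u, cexp (-I * s * E u) ∂μ) * cexp (I * c * s) := by
  have hlaplace : ∀ u,
      ((E u : ℂ) - c)⁻¹ = I * ∫ s in Ioi (0 : ℝ), cexp (-I * ((E u : ℂ) - c) * s) :=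
    fun u => inv_eq_I_mul_integral_cexp_Ioi (by simpa using hc)
  simp_rw [hlaplace]
  rw [integral_const_mul, integral_integral_swap (integrable_prod_cexp_neg_I_mul_sub μ hE hc)]
  congr 2 with s
  rw [← integral_mul_const]
  congr 1 with u
  rw [← Complex.exp_add]
  ring_nf

theorem norm_integral_inv_sub_le {g : ℝ → ℝ} (hg : IntegrableOn g (Ioi 0))
    (hbound : ∀ s : ℝ, 0 < s → ‖∫ u, cexp (-I * s * E u) ∂μ‖ ≤ g s) :
    ‖∫ u, ((E u : ℂ) - c)⁻¹ ∂μ‖ ≤ ∫ s in Ioi 0, g s := by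
  rw [integral_inv_sub_eq_integral_Ioi μ hE hc, norm_mul, norm_I, one_mul]
  refine norm_integral_le_of_norm_le hg ?_
  filter_upwards [ae_restrict_mem measurableSet_Ioi] with s (hs : 0 < s)
  have hphase : ‖cexp (I * c * s)‖ ≤ 1 := by
    have hre : (I * c * s).re = -(c.im * s) := by simp
    rw [norm_exp, Real.exp_le_one_iff, hre, neg_nonpos]
    positivity
  calc ‖(∫ u, cexp (-I * s * E u) ∂μ) * cexp (I * c * s)‖
      = ‖∫ u, cexp (-I * s * E u) ∂μ‖ * ‖cexp (I * c * s)‖ := norm_mul _ _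
    _ ≤ ‖∫ u, cexp (-I * s * E u) ∂μ‖ := mul_le_of_le_one_right (norm_nonneg _) hphase
    _ ≤ g s := hbound s hs

end Resolvent

/-- If the free evolution on the torus decays, `|∫ e^{-isE(u)} du| ≤ C ⟨s⟩^{-3/2}`,
then the resolvent integrals `∫ du' (E(u') - a - α - iν)⁻¹` are bounded by a
constant `C'` uniformly in `ν > 0`, `α ∈ ℝ`, and `a ∈ [-6, 6]`. -/
theorem resolvent_uniform_bound {X : Type*} [MeasurableSpace X]
    (μ : Measure X) [IsFiniteMeasure μ]
    (E : X → ℝ) (hE : Measurable E) (C : ℝ)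
    (hdecay : ∀ s : ℝ,
      ‖∫ u, Complex.exp (-Complex.I * s * (E u)) ∂μ‖ ≤ C * (1 + s ^ 2) ^ (-(3 : ℝ) / 4)) :
    ∃ C' : ℝ, ∀ (ν α a : ℝ), 0 < ν → a ∈ Set.Icc (-6 : ℝ) 6 →
      ‖∫ u, ((E u : ℂ) - a - α - Complex.I * ν)⁻¹ ∂μ‖ ≤ C' := by
  have hmajorant : Integrable fun s : ℝ => (1 + s ^ 2) ^ (-(3 : ℝ) / 4) := by
    simpa only [neg_div] using integrable_one_add_sq_rpow_neg (r := 3 / 4) (by norm_num)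
  refine ⟨∫ s in Ioi (0 : ℝ), C * (1 + s ^ 2) ^ (-(3 : ℝ) / 4), fun ν α a hν _ => ?_⟩
  have hc : 0 < ((a : ℂ) + α + I * ν).im := by simpa using hν
  convert norm_integral_inv_sub_le μ hE hc (hmajorant.integrableOn.const_mul C)
    (fun s _ => hdecay s) using 4
  ring
end

section
/- Under the same ⟨s⟩^{-3/2} decay hypothesis, for |γ| < ν one has |∫ du' 1/(E(u')-a-γ-iν) - ∫ du' 1/(E(u')-a-iν)| ≤ C ν^{1/2}, uniformly in a ∈ [-6,6]. -/
/-!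
Writing each resolvent as a Laplace transform, `(x - θ - iν)⁻¹ = i ∫₀^∞ e^{-is(x - θ - iν)} ds`,
and exchanging the order of integration, the difference becomes
`i ∫₀^∞ F(s) e^{(ia - ν)s} (e^{iγs} - 1) ds` with `F(s) = ∫ e^{-isE} dμ`.
Since `|e^{iγs} - 1| ≤ |γ| s ≤ ν s` and `|F(s)| ≤ C s^{-3/2}`, the integrand is at most
`C ν s^{-1/2} e^{-νs}`, whose integral is `C √π √ν`.
-/

open MeasureTheory Complex Set

lemma inv_eq_I_mul_integral_exp {z : ℂ} (hz : z.im < 0) :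
    z⁻¹ = I * ∫ s in Ioi (0 : ℝ), cexp (-I * z * s) := by
  have hre : (-I * z).re < 0 := by simpa using hz
  have hz0 : z ≠ 0 := by rintro rfl; simp at hz
  rw [integral_exp_mul_complex_Ioi hre 0]
  field_simp
  simp

section

variable {X : Type*} [MeasurableSpace X] (μ : Measure X) [IsFiniteMeasure μ] {E : X → ℝ}
  {ρ : Measure ℝ} [SFinite ρ] {w : ℝ → ℂ}

lemma integrable_cexp_mul_prod (hE : Measurable E) (hw : Integrable w ρ) :
    Integrable (fun p : X × ℝ => cexp (-I * p.2 * E p.1) * w p.2) (μ.prod ρ) := by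
  refine (hw.comp_snd μ).bdd_mul (c := 1) (by fun_prop) (.of_forall fun p => ?_)
  rw [norm_exp]
  simp

lemma integrable_integral_cexp_mul (hE : Measurable E) (hw : Integrable w ρ) :
    Integrable (fun s : ℝ => (∫ u, cexp (-I * s * E u) ∂μ) * w s) ρ := by
  simpa only [integral_mul_const] using (integrable_cexp_mul_prod μ hE hw).integral_prod_right

lemma integral_integral_cexp_mul_swap (hE : Measurable E) (hw : Integrable w ρ) :
    ∫ u, ∫ s, cexp (-I * s * E u) * w s ∂ρ ∂μ = ∫ s, (∫ u, cexp (-I * s * E u) ∂μ) * w s ∂ρ := by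
  rw [integral_integral_swap (f := fun u (s : ℝ) => cexp (-I * s * E u) * w s)
    (integrable_cexp_mul_prod μ hE hw)]
  simp only [integral_mul_const]

lemma integral_resolvent_eq_laplace (hE : Measurable E) {ν : ℝ} (hν : 0 < ν) (θ : ℝ) :
    ∫ u, ((E u : ℂ) - θ - I * ν)⁻¹ ∂μ
      = I * ∫ s in Ioi (0 : ℝ), (∫ u, cexp (-I * s * E u) ∂μ) * cexp ((I * θ - ν) * s) := by
  have hpt (u : X) : ((E u : ℂ) - θ - I * ν)⁻¹
      = I * ∫ s in Ioi (0 : ℝ), cexp (-I * s * E u) * cexp ((I * θ - ν) * s) := by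
    rw [inv_eq_I_mul_integral_exp (by simpa using hν)]
    congr 2 with s
    rw [← Complex.exp_add]
    ring_nf
    simp only [I_sq]
    ring_nf
  simp_rw [hpt, integral_const_mul]
  rw [integral_integral_cexp_mul_swap μ hE (integrableOn_exp_mul_complex_Ioi (by simpa using hν) 0)]

end

lemma norm_cexp_shift_sub_le (θ γ ν s : ℝ) :
    ‖cexp ((I * ↑(θ + γ) - ν) * s) - cexp ((I * θ - ν) * s)‖ ≤ |γ * s| * Real.exp (-(ν * s)) := by
  have hsplit : cexp ((I * ↑(θ + γ) - ν) * s) - cexp ((I * θ - ν) * s)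
      = cexp ((I * θ - ν) * s) * (cexp (I * ↑(γ * s)) - 1) := by
    rw [mul_sub, mul_one, ← Complex.exp_add]
    push_cast
    ring_nf
  rw [hsplit, norm_mul, mul_comm]
  gcongr
  · exact Real.norm_exp_I_mul_ofReal_sub_one_le
  · rw [Complex.norm_exp]; simp

lemma one_add_sq_rpow_le {s : ℝ} (hs : 0 < s) :
    (1 + s ^ 2) ^ (-(3 : ℝ) / 4) ≤ s ^ (-(3 : ℝ) / 2) := by
  calc (1 + s ^ 2) ^ (-(3 : ℝ) / 4) ≤ (s ^ 2) ^ (-(3 : ℝ) / 4) :=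
        Real.rpow_le_rpow_of_nonpos (by positivity) (by linarith) (by norm_num)
    _ = s ^ (-(3 : ℝ) / 2) := by
        rw [← Real.rpow_natCast s 2, ← Real.rpow_mul hs.le]
        norm_num

lemma integrableOn_rpow_neg_half_mul_exp_neg_mul {ν : ℝ} (hν : 0 < ν) :
    IntegrableOn (fun s : ℝ => s ^ (-(1 / 2) : ℝ) * Real.exp (-(ν * s))) (Ioi 0) := by
  simpa [neg_div] using integrableOn_rpow_mul_exp_neg_mul_rpow (p := 1) (s := -(1 : ℝ) / 2)
    (by norm_num) one_pos hν

lemma integral_rpow_neg_half_mul_exp_neg_mul {ν : ℝ} (hν : 0 < ν) :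
    ∫ s in Ioi (0 : ℝ), s ^ (-(1 / 2) : ℝ) * Real.exp (-(ν * s)) = √Real.pi / √ν := by
  have h := Real.integral_rpow_mul_exp_neg_mul_Ioi (a := 1 / 2) one_half_pos hν
  norm_num at h
  rw [h, Real.Gamma_one_half_eq, ← Real.sqrt_eq_rpow, Real.sqrt_inv]
  ring

lemma norm_mul_cexp_shift_sub_le {f : ℂ} {C ν γ θ s : ℝ} (hC : 0 ≤ C) (hs : 0 < s)
    (hγ : |γ| ≤ ν) (hf : ‖f‖ ≤ C * (1 + s ^ 2) ^ (-(3 : ℝ) / 4)) :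
    ‖f * cexp ((I * ↑(θ + γ) - ν) * s) - f * cexp ((I * θ - ν) * s)‖
      ≤ C * ν * (s ^ (-(1 / 2) : ℝ) * Real.exp (-(ν * s))) := by
  have hγs : |γ * s| ≤ ν * s := by
    rw [abs_mul, abs_of_pos hs]
    gcongr
  rw [← mul_sub, norm_mul]
  calc ‖f‖ * ‖cexp ((I * ↑(θ + γ) - ν) * s) - cexp ((I * θ - ν) * s)‖
      ≤ C * s ^ (-(3 : ℝ) / 2) * (ν * s * Real.exp (-(ν * s))) := by
        gcongr
        · exact hf.trans (by gcongr; exact one_add_sq_rpow_le hs)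
        · exact (norm_cexp_shift_sub_le θ γ ν s).trans (by gcongr)
    _ = C * ν * (s ^ (-(1 / 2) : ℝ) * Real.exp (-(ν * s))) := by
        have : s ^ (-(3 : ℝ) / 2) * s = s ^ (-(1 / 2) : ℝ) := by
          rw [← Real.rpow_add_one hs.ne']
          norm_num
        rw [← this]
        ring

/-- Under the same `⟨s⟩^{-3/2}` decay hypothesis on the free evolution,
shifting the spectral parameter by `γ` with `|γ| < ν` changes the resolvent
integral by at most `C ν^{1/2}`, uniformly in `a ∈ [-6, 6]`. -/
theorem resolvent_shift_bound {X : Type*} [MeasurableSpace X]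
    (μ : Measure X) [IsFiniteMeasure μ]
    (E : X → ℝ) (hE : Measurable E) (C : ℝ)
    (hdecay : ∀ s : ℝ,
      ‖∫ u, Complex.exp (-Complex.I * s * (E u)) ∂μ‖ ≤ C * (1 + s ^ 2) ^ (-(3 : ℝ) / 4)) :
    ∃ C' : ℝ, ∀ (ν γ a : ℝ), 0 < ν → |γ| < ν → a ∈ Set.Icc (-6 : ℝ) 6 →
      ‖(∫ u, ((E u : ℂ) - a - γ - Complex.I * ν)⁻¹ ∂μ)
          - ∫ u, ((E u : ℂ) - a - Complex.I * ν)⁻¹ ∂μ‖ ≤ C' * Real.sqrt ν := by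
  have hC : 0 ≤ C := by simpa using (norm_nonneg _).trans (hdecay 0)
  refine ⟨C * √Real.pi, fun ν γ a hν hγ _ => ?_⟩
  have hshift : ∫ u, ((E u : ℂ) - a - γ - I * ν)⁻¹ ∂μ
      = ∫ u, ((E u : ℂ) - ↑(a + γ) - I * ν)⁻¹ ∂μ := by
    push_cast
    simp_rw [sub_add_eq_sub_sub]
  have hw (θ : ℝ) := integrable_integral_cexp_mul μ hE
    (integrableOn_exp_mul_complex_Ioi (a := I * θ - ν) (by simpa using hν) 0)
  rw [hshift, integral_resolvent_eq_laplace μ hE hν, integral_resolvent_eq_laplace μ hE hν, ← mul_sub,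
    ← integral_sub (hw _) (hw _), norm_mul, norm_I, one_mul]
  calc _ ≤ ∫ s in Ioi (0 : ℝ), C * ν * (s ^ (-(1 / 2) : ℝ) * Real.exp (-(ν * s))) :=
        norm_integral_le_of_norm_le ((integrableOn_rpow_neg_half_mul_exp_neg_mul hν).const_mul _)
          ((ae_restrict_iff' measurableSet_Ioi).mpr (.of_forall fun s hs =>
            norm_mul_cexp_shift_sub_le hC hs hγ.le (hdecay s)))
    _ = C * √Real.pi * √ν := by
        rw [integral_const_mul, integral_rpow_neg_half_mul_exp_neg_mul hν]
        nth_rw 1 [← Real.mul_self_sqrt hν.le]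
        field_simp
end

section
/- For any ν > 0 and any real E with |E| > 1/τ, setting ζ = π/|E|, one has |∫₀^τ ds (s^m/m!) e^{-isE} g(s)| ≤ C^m ζ (2τ)^m/m! whenever g : ℝ₊ → ℂ satisfies |g(s)| ≤ 1 and |g(s+ζ) - g(s)| ≤ Cλζ with λτ ≤ C'. Consequently |∫₀^τ ds (s^m/m!) e^{-isE} g(s)| ≤ C'' (1/(|E| + τ^{-1})) (C''τ)^m/m!. -/
/-!
The phase `e^{-isE}` changes sign under `s ↦ s + ζ`, `ζ = π/|E|`, while `g` moves by at most
`δ = Cλζ`. Pairing `s` with `s + ζ`, the integrand `f = φ e g` with the increasing weight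
`φ(s) = s^m/m!` satisfies `|f(s) + f(s+ζ)| ≤ δ φ(s) + (φ(s+ζ) - φ(s))`, and the increments of `φ`
telescope: `∫₀^τ (φ(s+ζ) - φ(s)) ds = ∫_τ^{τ+ζ} φ - ∫₀^ζ φ`. Since
`2 ∫₀^τ f = ∫₀^τ (f(s) + f(s+ζ)) ds + ∫₀^ζ f - ∫_τ^{τ+ζ} f`, this gives
`|∫₀^τ f| ≤ (δ/2) ∫₀^τ φ + ∫_τ^{τ+ζ} φ ≤ (δτ/2 + ζ) φ(τ+ζ)`. Both bounds then follow from
`λτ ≤ C'`, `ζ ≤ πτ` and `ζ ≤ 2π/(|E| + τ⁻¹)`, the last two because `|E| > τ⁻¹`.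
-/

open MeasureTheory Real Set intervalIntegral

section
variable {F : Type*} [NormedAddCommGroup F] [NormedSpace ℝ F]

theorem intervalIntegral.integral_comp_add_right_eq {f : ℝ → F} {a b d : ℝ}
    (hab : IntervalIntegrable f volume a b) (hd : IntervalIntegrable f volume (a + d) (b + d))
    (had : IntervalIntegrable f volume a (a + d)) :
    ∫ x in a..b, f (x + d) =
      (∫ x in a..b, f x) - (∫ x in a..a + d, f x) + ∫ x in b..b + d, f x := by
  rw [integral_comp_add_right, sub_add, ← integral_interval_sub_interval_comm hab hd had]
  abel

theorem IntervalIntegrable.smul_of_norm_le_one {φ : ℝ → ℝ} {u : ℝ → F} {a b : ℝ}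
    (hφ : IntervalIntegrable φ volume a b) (hu : AEStronglyMeasurable u)
    (hu1 : ∀ s, ‖u s‖ ≤ 1) : IntervalIntegrable (fun s ↦ φ s • u s) volume a b :=
  ⟨hφ.1.smul_bdd 1 hu.restrict (ae_of_all _ hu1), hφ.2.smul_bdd 1 hu.restrict (ae_of_all _ hu1)⟩

theorem MonotoneOn.intervalIntegrable_of_Ici {φ : ℝ → ℝ} (hφ : MonotoneOn φ (Ici 0))
    {a b : ℝ} (ha : 0 ≤ a) (hb : 0 ≤ b) : IntervalIntegrable φ volume a b :=
  (hφ.mono fun _ hx ↦ (le_min ha hb).trans hx.1).intervalIntegrable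

theorem integral_le_mul_of_monotoneOn {φ : ℝ → ℝ} (hφ : MonotoneOn φ (Ici 0)) {a b c : ℝ}
    (ha : 0 ≤ a) (hab : a ≤ b) (hbc : b ≤ c) : ∫ s in a..b, φ s ≤ (b - a) * φ c := by
  rw [← smul_eq_mul, ← intervalIntegral.integral_const]
  exact integral_mono_on hab (hφ.intervalIntegrable_of_Ici ha (ha.trans hab))
    intervalIntegrable_const fun x hx ↦
      hφ (ha.trans hx.1) (ha.trans (hab.trans hbc)) (hx.2.trans hbc)

theorem norm_smul_add_smul_le {a b : ℝ} {x y : F} (ha : 0 ≤ a) (hab : a ≤ b) (hy : ‖y‖ ≤ 1) :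
    ‖a • x + b • y‖ ≤ a * ‖y + x‖ + (b - a) :=
  calc ‖a • x + b • y‖ = ‖a • (y + x) + (b - a) • y‖ := by rw [smul_add, sub_smul]; abel_nf
    _ ≤ a * ‖y + x‖ + (b - a) * 1 := by
      refine (norm_add_le _ _).trans (add_le_add ?_ ?_) <;>
        rw [norm_smul, Real.norm_eq_abs]
      · rw [abs_of_nonneg ha]
      · rw [abs_of_nonneg (sub_nonneg.2 hab)]
        exact mul_le_mul_of_nonneg_left hy (sub_nonneg.2 hab)
    _ = a * ‖y + x‖ + (b - a) := by rw [mul_one]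

variable {φ : ℝ → ℝ} {u : ℝ → F} {τ ζ δ : ℝ}

theorem norm_integral_smul_le_integral {a b : ℝ} (hab : a ≤ b)
    (hφ : IntervalIntegrable φ volume a b) (hφnn : ∀ s ∈ Ioc a b, 0 ≤ φ s)
    (hu1 : ∀ s, ‖u s‖ ≤ 1) : ‖∫ s in a..b, φ s • u s‖ ≤ ∫ s in a..b, φ s := by
  refine norm_integral_le_of_norm_le hab (ae_of_all _ fun s hs ↦ ?_) hφ
  rw [norm_smul, Real.norm_eq_abs, abs_of_nonneg (hφnn s hs)]
  exact mul_le_of_le_one_right (hφnn s hs) (hu1 s)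

theorem norm_integral_smul_add_shift_le (hτ : 0 ≤ τ) (hζ : 0 ≤ ζ)
    (hφ : MonotoneOn φ (Ici 0)) (hφ0 : 0 ≤ φ 0) (hu1 : ∀ s, ‖u s‖ ≤ 1)
    (hshift : ∀ s, 0 ≤ s → ‖u (s + ζ) + u s‖ ≤ δ) :
    ‖∫ s in 0..τ, (φ s • u s + φ (s + ζ) • u (s + ζ))‖ ≤
      δ * (∫ s in 0..τ, φ s) + (∫ s in τ..τ + ζ, φ s) - ∫ s in 0..ζ, φ s := by
  have hφi {a b : ℝ} (ha : 0 ≤ a) (hb : 0 ≤ b) : IntervalIntegrable φ volume a b :=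
    hφ.intervalIntegrable_of_Ici ha hb
  have hφshift : IntervalIntegrable (fun s ↦ φ (s + ζ)) volume 0 τ := by
    simpa using (hφi hζ (add_nonneg hτ hζ)).comp_add_right ζ
  have hpoint : ∀ s ∈ Ioc 0 τ,
      ‖φ s • u s + φ (s + ζ) • u (s + ζ)‖ ≤ δ * φ s + (φ (s + ζ) - φ s) := fun s hs ↦ by
    have hs : 0 ≤ s := hs.1.le
    have hφs : 0 ≤ φ s := hφ0.trans (hφ self_mem_Ici hs hs)
    refine (norm_smul_add_smul_le hφs (hφ hs (by simp only [mem_Ici]; linarith)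
      (by linarith)) (hu1 _)).trans ?_
    rw [mul_comm δ]
    gcongr
    exact hshift s hs
  have hbound := ((hφi le_rfl hτ).const_mul δ).add (hφshift.sub (hφi le_rfl hτ))
  refine (norm_integral_le_of_norm_le hτ (ae_of_all _ hpoint) hbound).trans_eq ?_
  rw [integral_add ((hφi le_rfl hτ).const_mul δ) (hφshift.sub (hφi le_rfl hτ)),
    integral_sub hφshift (hφi le_rfl hτ), intervalIntegral.integral_const_mul,
    integral_comp_add_right_eq (hφi le_rfl hτ) (by simpa using hφi hζ (add_nonneg hτ hζ))
      (by simpa using hφi le_rfl hζ)]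
  simp only [zero_add]
  ring

theorem norm_integral_smul_le_of_norm_add_shift_le (hτ : 0 ≤ τ) (hζ : 0 ≤ ζ)
    (hφ : MonotoneOn φ (Ici 0)) (hφ0 : 0 ≤ φ 0) (hu : AEStronglyMeasurable u)
    (hu1 : ∀ s, ‖u s‖ ≤ 1) (hshift : ∀ s, 0 ≤ s → ‖u (s + ζ) + u s‖ ≤ δ) :
    ‖∫ s in 0..τ, φ s • u s‖ ≤ δ / 2 * (∫ s in 0..τ, φ s) + ∫ s in τ..τ + ζ, φ s := by
  have hφi {a b : ℝ} (ha : 0 ≤ a) (hb : 0 ≤ b) : IntervalIntegrable φ volume a b :=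
    hφ.intervalIntegrable_of_Ici ha hb
  have hfi {a b : ℝ} (ha : 0 ≤ a) (hb : 0 ≤ b) :
      IntervalIntegrable (fun s ↦ φ s • u s) volume a b :=
    (hφi ha hb).smul_of_norm_le_one hu hu1
  have hτζ : 0 ≤ τ + ζ := add_nonneg hτ hζ
  have hpair : (∫ s in 0..τ, φ s • u s) + ∫ s in 0..τ, φ s • u s =
      (∫ s in 0..τ, (φ s • u s + φ (s + ζ) • u (s + ζ))) + (∫ s in 0..ζ, φ s • u s)
        - ∫ s in τ..τ + ζ, φ s • u s := by
    rw [integral_add (hfi le_rfl hτ) (by simpa using (hfi hζ hτζ).comp_add_right ζ),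
      integral_comp_add_right_eq (hfi le_rfl hτ) (by simpa using hfi hζ hτζ)
        (by simpa using hfi le_rfl hζ)]
    simp only [zero_add]
    abel
  have hsplit : 2 * ‖∫ s in 0..τ, φ s • u s‖ ≤
      ‖∫ s in 0..τ, (φ s • u s + φ (s + ζ) • u (s + ζ))‖ + ‖∫ s in 0..ζ, φ s • u s‖
        + ‖∫ s in τ..τ + ζ, φ s • u s‖ := by
    rw [← Real.norm_two, ← norm_smul, two_smul, hpair]
    exact (norm_sub_le _ _).trans (add_le_add_left (norm_add_le _ _) _)
  have hend {a b : ℝ} (ha : 0 ≤ a) (hab : a ≤ b) :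
      ‖∫ s in a..b, φ s • u s‖ ≤ ∫ s in a..b, φ s :=
    norm_integral_smul_le_integral hab (hφi ha (ha.trans hab))
      (fun s hs ↦ hφ0.trans (hφ self_mem_Ici (ha.trans hs.1.le) (ha.trans hs.1.le))) hu1
  linarith [norm_integral_smul_add_shift_le hτ hζ hφ hφ0 hu1 hshift, hend le_rfl hζ,
    hend hτ (le_add_of_nonneg_right hζ)]

theorem norm_integral_smul_le_mul_of_norm_add_shift_le (hτ : 0 ≤ τ) (hζ : 0 ≤ ζ)
    (hφ : MonotoneOn φ (Ici 0)) (hφ0 : 0 ≤ φ 0) (hu : AEStronglyMeasurable u)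
    (hu1 : ∀ s, ‖u s‖ ≤ 1) (hshift : ∀ s, 0 ≤ s → ‖u (s + ζ) + u s‖ ≤ δ) :
    ‖∫ s in 0..τ, φ s • u s‖ ≤ (δ * τ / 2 + ζ) * φ (τ + ζ) := by
  have hδ : 0 ≤ δ := (norm_nonneg _).trans (hshift 0 le_rfl)
  have hbulk := integral_le_mul_of_monotoneOn hφ le_rfl hτ (le_add_of_nonneg_right hζ)
  have hend := integral_le_mul_of_monotoneOn hφ hτ (le_add_of_nonneg_right hζ) le_rfl
  have := norm_integral_smul_le_of_norm_add_shift_le hτ hζ hφ hφ0 hu hu1 hshift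
  simp only [sub_zero, add_sub_cancel_left] at hbulk hend
  nlinarith [mul_le_mul_of_nonneg_left hbulk hδ]

end

theorem Function.Antiperiodic.exp_neg_I_mul {E : ℝ} (hE : E ≠ 0) :
    Function.Antiperiodic (fun s : ℝ ↦ Complex.exp (-Complex.I * s * E)) (π / |E|) := by
  have hE' : (E : ℂ) ≠ 0 := by exact_mod_cast hE
  intro s
  rcases abs_cases E with ⟨h, -⟩ | ⟨h, -⟩ <;> rw [h] <;> dsimp only
  · have : -Complex.I * ↑(s + π / E) * E = -Complex.I * s * E - π * Complex.I := by
      push_cast; field_simp; ring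
    rw [this, Complex.exp_antiperiodic.sub_eq]
  · have : -Complex.I * ↑(s + π / -E) * E = -Complex.I * s * E + π * Complex.I := by
      push_cast; field_simp; ring
    rw [this, Complex.exp_antiperiodic]

theorem norm_integral_pow_mul_exp_mul_le {m : ℕ} {τ E δ : ℝ} {g : ℝ → ℂ} (hτ : 0 ≤ τ)
    (hE : E ≠ 0) (hg : Measurable g) (hg1 : ∀ s, ‖g s‖ ≤ 1)
    (hgζ : ∀ s, 0 ≤ s → ‖g (s + π / |E|) - g s‖ ≤ δ) :
    ‖∫ s in 0..τ, (s : ℂ) ^ m / (m.factorial : ℂ) * Complex.exp (-Complex.I * s * E) * g s‖ ≤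
      (δ * τ / 2 + π / |E|) * ((τ + π / |E|) ^ m / m.factorial) := by
  set e : ℝ → ℂ := fun s ↦ Complex.exp (-Complex.I * s * E)
  have he : Function.Antiperiodic e (π / |E|) := Function.Antiperiodic.exp_neg_I_mul hE
  have he1 (s : ℝ) : ‖e s‖ = 1 := by simp [e, Complex.norm_exp]
  have hintegrand : (fun s : ℝ ↦ (s : ℂ) ^ m / (m.factorial : ℂ) * e s * g s) =
      fun s ↦ (s ^ m / m.factorial : ℝ) • (e s * g s) := by
    funext s
    rw [Complex.real_smul]
    push_cast
    ring
  rw [hintegrand]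
  refine norm_integral_smul_le_mul_of_norm_add_shift_le hτ (by positivity)
    (fun a ha b _ hab ↦ by gcongr) (by positivity) ?_ ?_ fun s hs ↦ ?_
  · exact ((by fun_prop : Continuous e).measurable.mul hg).aestronglyMeasurable
  · intro s
    rw [norm_mul, he1, one_mul]
    exact hg1 s
  · rw [he s, neg_mul, neg_add_eq_sub, ← mul_sub, norm_mul,
      he1, one_mul, norm_sub_rev]
    exact hgζ s hs

theorem norm_integral_pow_mul_exp_mul_le_of_increment_le {m : ℕ} {C Cconst τ E lam : ℝ}
    {g : ℝ → ℂ} (hC : 0 ≤ C) (hτ : 0 < τ) (hE : 1 / τ < |E|) (hlam : 0 ≤ lam)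
    (hlamτ : lam * τ ≤ Cconst) (hg : Measurable g) (hg1 : ∀ s, ‖g s‖ ≤ 1)
    (hgζ : ∀ s, 0 ≤ s → ‖g (s + π / |E|) - g s‖ ≤ C * lam * (π / |E|)) :
    ‖∫ s in 0..τ, (s : ℂ) ^ m / (m.factorial : ℂ) * Complex.exp (-Complex.I * s * E) * g s‖ ≤
      (C * Cconst / 2 + 1) * (π / |E|) * (((1 + π) * τ) ^ m / m.factorial) := by
  have hE0 : 0 < |E| := (one_div_pos.2 hτ).trans hE
  have hζτ : π / |E| ≤ π * τ := by
    rw [div_le_iff₀ hE0]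
    rw [div_lt_iff₀ hτ] at hE
    nlinarith [pi_pos]
  have hζ : 0 < π / |E| := div_pos pi_pos hE0
  have hCτ : C * (lam * τ) ≤ C * Cconst := mul_le_mul_of_nonneg_left hlamτ hC
  have hCC : 0 ≤ C * Cconst := hCτ.trans' (by positivity)
  refine (norm_integral_pow_mul_exp_mul_le hτ.le (abs_pos.1 hE0) hg hg1 hgζ).trans ?_
  gcongr
  · nlinarith [mul_le_mul_of_nonneg_right hCτ hζ.le]
  · linarith

/-- Oscillatory estimate for nested-diagram amplitudes: for `|E| > 1/τ`,
setting `ζ = π/|E|`, if `|g| ≤ 1`, `|g(s+ζ) - g(s)| ≤ C λ ζ` and `λτ ≤ C'`,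
then `|∫₀^τ (s^m/m!) e^{-isE} g(s) ds| ≤ K^{m+1} ζ (2τ)^m / m!`, and consequently
`|∫₀^τ (s^m/m!) e^{-isE} g(s) ds| ≤ K^{m+1} (|E| + τ⁻¹)⁻¹ (Kτ)^m / m!`. -/
theorem nested_oscillatory_bound (C Cconst : ℝ) (hC : 0 ≤ C) (hCconst : 0 ≤ Cconst) :
    ∃ K : ℝ, 0 < K ∧
      ∀ (m : ℕ) (τ E lam : ℝ) (g : ℝ → ℂ),
        0 < τ → 1 / τ < |E| → 0 ≤ lam → lam * τ ≤ Cconst →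
        Measurable g → (∀ s, ‖g s‖ ≤ 1) →
        (∀ s, 0 ≤ s → ‖g (s + Real.pi / |E|) - g s‖ ≤ C * lam * (Real.pi / |E|)) →
        ‖∫ s in (0 : ℝ)..τ, ((s : ℂ) ^ m / (m.factorial : ℂ))
              * Complex.exp (-Complex.I * s * E) * g s‖
            ≤ K ^ (m + 1) * (Real.pi / |E|) * (2 * τ) ^ m / m.factorial ∧
        ‖∫ s in (0 : ℝ)..τ, ((s : ℂ) ^ m / (m.factorial : ℂ))
              * Complex.exp (-Complex.I * s * E) * g s‖
            ≤ K ^ (m + 1) * (1 / (|E| + τ⁻¹)) * (K * τ) ^ m / m.factorial := by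
  have hCC := mul_nonneg hC hCconst
  refine ⟨π * (C * Cconst + 2) + 1, by positivity,
    fun m τ E lam g hτ hE hlam hlamτ hg hg1 hgζ ↦ ?_⟩
  set K := π * (C * Cconst + 2) + 1
  have hbound := norm_integral_pow_mul_exp_mul_le_of_increment_le (m := m) hC hτ hE hlam hlamτ
    hg hg1 hgζ
  have hAK : C * Cconst / 2 + 1 ≤ K := by nlinarith [pi_gt_three]
  have hπK : 1 + π ≤ K := by nlinarith
  have hπτ : (1 + π) * τ ≤ K * τ := by gcongr
  have hπτ2 : (1 + π) * τ ≤ K * (2 * τ) :=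
    hπτ.trans (mul_le_mul_of_nonneg_left (by linarith) (by positivity))
  have hπτK : (1 + π) * τ ≤ K * (K * τ) :=
    hπτ.trans (le_mul_of_one_le_left (by positivity) (by linarith))
  have hAζ : (C * Cconst / 2 + 1) * (π / |E|) ≤ K * (1 / (|E| + τ⁻¹)) := by
    have hE0 : 0 < |E| := (one_div_pos.2 hτ).trans hE
    rw [one_div, ← sub_pos] at hE
    rw [mul_one_div, ← mul_div_assoc, div_le_div_iff₀ hE0 (by positivity)]
    nlinarith
  refine ⟨hbound.trans ?_, hbound.trans ?_⟩
  · calc _ ≤ K * (π / |E|) * ((K * (2 * τ)) ^ m / m.factorial) := by gcongr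
      _ = _ := by rw [pow_succ, mul_pow]; ring
  · calc _ ≤ K * (1 / (|E| + τ⁻¹)) * ((K * (K * τ)) ^ m / m.factorial) := by
          gcongr ?_ * (?_ ^ _ / _)
      _ = _ := by rw [pow_succ, mul_pow]; ring
end
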